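/- The function h(α) := 2√2·sin α·cos α/(1 + cos²α) is strictly increasing on [0, π/4], with h(0) = 0 and h(π/4) = 2√2/3 < 1. Consequently, for every α ∈ (0, π/4] and every positive integer n with 4n·arcsin(h(α)) ≥ π, there exists a unique ᾱ ∈ (0, α] such that 4n·arcsin(h(ᾱ)) = π. -/
import Mathlib


open Real

noncomputable section

/-- The magnitude of the sine of the quarter-cycle rotation angle. -/
def hf (α : ℝ) : ℝ := 2 * Real.sqrt 2 * Real.sin α * Real.cos α / (1 + (Real.cos α)^2)

lemma hf_denom_pos (α : ℝ) : 0 < 1 + (Real.cos α)^2 := by positivity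

lemma hf_cont : Continuous hf := by
  apply Continuous.div
  · continuity
  · continuity
  · intro x; have := hf_denom_pos x; linarith

lemma hf_zero : hf 0 = 0 := by simp [hf]

lemma hf_sq (α : ℝ) :
    (hf α)^2 = 8 * (Real.sin α)^2 * (1 - (Real.sin α)^2) / (2 - (Real.sin α)^2)^2 := by
  have hc : (Real.cos α)^2 = 1 - (Real.sin α)^2 := Real.cos_sq' α
  have h2 : Real.sqrt 2 ^ 2 = 2 := Real.sq_sqrt (by norm_num)
  rw [hf, div_pow]
  have hden : (1 + Real.cos α ^ 2)^2 = (2 - (Real.sin α)^2)^2 := by rw [hc]; ring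
  rw [hden]
  congr 1
  linear_combination 4*(Real.sin α)^2*(Real.cos α)^2*h2 + 8*(Real.sin α)^2*hc

lemma hf_nonneg {α : ℝ} (hα : α ∈ Set.Icc 0 (π/4)) : 0 ≤ hf α := by
  obtain ⟨h0, h1⟩ := hα
  have hs : 0 ≤ Real.sin α := Real.sin_nonneg_of_nonneg_of_le_pi h0
    (by linarith [Real.pi_pos])
  have hc : 0 ≤ Real.cos α := Real.cos_nonneg_of_mem_Icc
    ⟨by linarith [Real.pi_pos], by linarith [Real.pi_pos]⟩
  have hd := hf_denom_pos α
  apply div_nonneg _ (le_of_lt hd)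
  positivity

lemma hf_strictMono : StrictMonoOn hf (Set.Icc 0 (π/4)) := by
  intro a ha b hb hab
  have hpi := Real.pi_pos
  have ha' : a ∈ Set.Icc (-(π/2)) (π/2) := ⟨by linarith [ha.1], by linarith [ha.2]⟩
  have hb' : b ∈ Set.Icc (-(π/2)) (π/2) := ⟨by linarith [hb.1], by linarith [hb.2]⟩
  have hsin : Real.sin a < Real.sin b := Real.strictMonoOn_sin ha' hb' hab
  have hsa : 0 ≤ Real.sin a := Real.sin_nonneg_of_nonneg_of_le_pi ha.1 (by linarith [ha.2])
  have hsb : Real.sin b ≤ Real.sqrt 2 / 2 := by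
    have h4 : π/4 ∈ Set.Icc (-(π/2)) (π/2) := ⟨by linarith, by linarith⟩
    have := Real.strictMonoOn_sin.monotoneOn hb' h4 hb.2
    rwa [Real.sin_pi_div_four] at this
  have hsqrt2 : Real.sqrt 2 ^ 2 = 2 := Real.sq_sqrt (by norm_num)
  have hsqrt2' : Real.sqrt 2 ≤ 3/2 := by nlinarith [Real.sqrt_nonneg 2]
  set s := Real.sin a with hs_def
  set t := Real.sin b with ht_def
  have hs2 : s^2 < t^2 := by nlinarith
  have ht_le : t^2 ≤ 1/2 := by nlinarith
  have hs_lt : s^2 < 1/2 := lt_of_lt_of_le hs2 ht_le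
  -- compare squares
  have hda : (0:ℝ) < (2 - s^2)^2 := by nlinarith
  have hdb : (0:ℝ) < (2 - t^2)^2 := by nlinarith
  have hsq : (hf a)^2 < (hf b)^2 := by
    rw [hf_sq, hf_sq, div_lt_div_iff₀ hda hdb]
    nlinarith [sq_nonneg (s*t), sq_nonneg (s+t), sq_nonneg (s-t), mul_pos hda hdb]
  have hb_nonneg : 0 ≤ hf b := hf_nonneg hb
  exact lt_of_pow_lt_pow_left₀ 2 hb_nonneg hsq

lemma hf_pi_div_four : hf (π/4) = 2 * Real.sqrt 2 / 3 := by
  rw [hf, Real.sin_pi_div_four, Real.cos_pi_div_four]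
  have h2 : Real.sqrt 2 ^ 2 = 2 := Real.sq_sqrt (by norm_num)
  field_simp
  nlinarith [Real.sqrt_nonneg 2]

lemma hf_lt_one : 2 * Real.sqrt 2 / 3 < 1 := by
  have h2 : Real.sqrt 2 ^ 2 = 2 := Real.sq_sqrt (by norm_num)
  nlinarith [Real.sqrt_nonneg 2]

lemma hf_le {α : ℝ} (hα : α ∈ Set.Icc 0 (π/4)) : hf α ≤ 2 * Real.sqrt 2 / 3 := by
  rcases eq_or_lt_of_le hα.2 with h | h
  · rw [h, hf_pi_div_four]
  · have hpi := Real.pi_pos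
    have := hf_strictMono hα ⟨by linarith, le_refl _⟩ h
    rw [hf_pi_div_four] at this
    linarith

theorem exact_spin_flip_parameter :
    StrictMonoOn hf (Set.Icc 0 (π/4)) ∧
    hf 0 = 0 ∧
    hf (π/4) = 2 * Real.sqrt 2 / 3 ∧
    2 * Real.sqrt 2 / 3 < 1 ∧
    ∀ α ∈ Set.Ioc (0:ℝ) (π/4), ∀ n : ℕ, 0 < n →
      π ≤ 4 * n * Real.arcsin (hf α) →
      ∃! ᾱ : ℝ, ᾱ ∈ Set.Ioc 0 α ∧ 4 * n * Real.arcsin (hf ᾱ) = π := by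
  refine ⟨hf_strictMono, hf_zero, hf_pi_div_four, hf_lt_one, ?_⟩
  intro α hα n hn hge
  have hpi := Real.pi_pos
  have hα0 : (0:ℝ) < α := hα.1
  have hα4 : α ≤ π/4 := hα.2
  have hsub : Set.Icc (0:ℝ) α ⊆ Set.Icc 0 (π/4) := Set.Icc_subset_Icc le_rfl hα4
  -- F is strictly monotone on [0, α]
  set F : ℝ → ℝ := fun x => 4 * n * Real.arcsin (hf x) with hF_def
  have hFmono : StrictMonoOn F (Set.Icc 0 α) := by
    intro x hx y hy hxy
    have hx' := hsub hx
    have hy' := hsub hy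
    have hlt : hf x < hf y := hf_strictMono hx' hy' hxy
    have harc : Real.arcsin (hf x) < Real.arcsin (hf y) := by
      apply Real.strictMonoOn_arcsin
      · exact ⟨by linarith [hf_nonneg hx'], by linarith [hf_le hx', hf_lt_one]⟩
      · exact ⟨by linarith [hf_nonneg hy'], by linarith [hf_le hy', hf_lt_one]⟩
      · exact hlt
    have h4n : (0:ℝ) < 4 * n := by positivity
    exact (mul_lt_mul_iff_right₀ h4n).mpr harc
  have hF0 : F 0 = 0 := by simp [hF_def, hf_zero]
  have hFcont : ContinuousOn F (Set.Icc 0 α) := by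
    apply Continuous.continuousOn
    exact continuous_const.mul (Real.continuous_arcsin.comp hf_cont)
  have hmem : π ∈ Set.Icc (F 0) (F α) := ⟨by rw [hF0]; linarith, hge⟩
  obtain ⟨ᾱ, hᾱmem, hᾱeq⟩ := intermediate_value_Icc (le_of_lt hα0) hFcont hmem
  have hᾱ0 : 0 < ᾱ := by
    rcases lt_or_eq_of_le hᾱmem.1 with h | h
    · exact h
    · exfalso; rw [← h] at hᾱeq; rw [hF0] at hᾱeq; linarith
  refine ⟨ᾱ, ⟨⟨hᾱ0, hᾱmem.2⟩, hᾱeq⟩, ?_⟩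
  rintro y ⟨⟨hy0, hyα⟩, hyeq⟩
  have hy_mem : y ∈ Set.Icc (0:ℝ) α := ⟨le_of_lt hy0, hyα⟩
  have hᾱ_mem : ᾱ ∈ Set.Icc (0:ℝ) α := hᾱmem
  exact hFmono.injOn hy_mem hᾱ_mem (hyeq.trans hᾱeq.symm)
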